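/- An oriented subgraph T of a map G on an orientable surface is partitionable (its edge set partitions into three pairwise homologous sets T_0, T_1, T_2) if and only if it is a topological Tutte-orientation (β(T,W) ≡ 0 (mod 3) for every closed walk W of the dual G*). -/

import Mathlib

/-!
Combinatorial framework for flows and homology on a map on an orientable surface.

* A `Multigraph` is a set of edges with a fixed reference orientation (source/target);
  flows on it are elements of ℤ^E.
* A dart is an edge together with a direction of traversal (`true` = forward).
* `charFlow l` is the characteristic flow of a list of darts (a walk):
  #forward traversals − #backward traversals of each edge.
* `beta p q = Σ_e p_e q_{e*}` is the pairing between flows on G and flows on its dual G*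
  (dual flows are indexed by the same edge set via e ↦ e*).
* A `SurfaceMap` records, for each edge, the faces on its left and right, and for each
  face its counterclockwise facial walk; the dual graph G* has the faces as vertices and
  e* oriented from the face on the right of e to the face on the left.
* `GoodFacialWalks` is the defining geometric property of the ccw facial walks:
  the ccw facial walk of a face f uses e forward iff f is on the left of e.
* Two flows are homologous iff their difference lies in the subgroup generated by the
  characteristic flows of the ccw facial walks.
-/

structure Multigraph (V E : Type) where
  src : E → V
  tgt : E → V

namespace Multigraph

variable {V E : Type}

def dtail (M : Multigraph V E) (d : E × Bool) : V := if d.2 then M.src d.1 else M.tgt d.1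

def dhead (M : Multigraph V E) (d : E × Bool) : V := if d.2 then M.tgt d.1 else M.src d.1

/-- A closed walk: a nonempty list of darts, consecutively chained, wrapping around. -/
def IsClosedWalk (M : Multigraph V E) (l : List (E × Bool)) : Prop :=
  l ≠ [] ∧ l.Chain' (fun d d' => M.dhead d = M.dtail d') ∧
    ∀ d ∈ l.head?, ∀ d' ∈ l.getLast?, M.dhead d' = M.dtail d

end Multigraph

/-- Characteristic flow of a walk (list of darts). -/
def charFlow {E : Type} [DecidableEq E] (l : List (E × Bool)) : E → ℤ :=
  fun e => (l.count (e, true) : ℤ) - (l.count (e, false) : ℤ)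

/-- The bilinear pairing β between flows of G and flows of G*. -/
def beta {E : Type} [Fintype E] (p q : E → ℤ) : ℤ := ∑ e, p e * q e

structure SurfaceMap (V E F : Type) where
  G : Multigraph V E
  leftFace : E → F
  rightFace : E → F
  /-- the counterclockwise facial walk of each face -/
  facialWalk : F → List (E × Bool)

namespace SurfaceMap

variable {V E F : Type}

/-- The dual map G*: vertices are the faces of G, and e* goes from the face on the
right of e to the face on the left of e. -/
def dual (M : SurfaceMap V E F) : Multigraph F E := ⟨M.rightFace, M.leftFace⟩

/-- The subgroup 𝔽 of ℤ^E generated by the ccw facial flows. -/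
def FacialSubgroup [DecidableEq E] (M : SurfaceMap V E F) : AddSubgroup (E → ℤ) :=
  AddSubgroup.closure (Set.range fun f => charFlow (M.facialWalk f))

/-- Two flows are homologous iff their difference lies in 𝔽. -/
def Homologous [DecidableEq E] (M : SurfaceMap V E F) (p q : E → ℤ) : Prop :=
  p - q ∈ M.FacialSubgroup

/-- Geometric defining property of the ccw facial walks. -/
def GoodFacialWalks [DecidableEq E] [DecidableEq F] (M : SurfaceMap V E F) : Prop :=
  (∀ f, M.G.IsClosedWalk (M.facialWalk f)) ∧
  ∀ f e, charFlow (M.facialWalk f) e =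
    (if M.leftFace e = f then 1 else 0) - (if M.rightFace e = f then 1 else 0)

end SurfaceMap

/-- An oriented subgraph of G, identified with its characteristic flow in {-1,0,1}^E. -/
def IsSubgraphFlow {E : Type} (T : E → ℤ) : Prop := ∀ e, T e = -1 ∨ T e = 0 ∨ T e = 1

/-- T is partitionable: its edge set splits into three pairwise homologous oriented
subgraphs T₀, T₁, T₂. -/
def Partitionable {V E F : Type} [DecidableEq E] (M : SurfaceMap V E F) (T : E → ℤ) : Prop :=
  ∃ T0 T1 T2 : E → ℤ, IsSubgraphFlow T0 ∧ IsSubgraphFlow T1 ∧ IsSubgraphFlow T2 ∧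
    (∀ e, T e = T0 e + T1 e + T2 e) ∧
    (∀ e, (T0 e = 0 ∧ T1 e = 0) ∨ (T0 e = 0 ∧ T2 e = 0) ∨ (T1 e = 0 ∧ T2 e = 0)) ∧
    M.Homologous T0 T1 ∧ M.Homologous T1 T2

/-- T is a topological Tutte-orientation: β(T,W) ≡ 0 (mod 3) for every closed walk W of G*
(the number of edges crossing W from left to right minus right to left is divisible by 3). -/
def IsTopologicalTutte {V E F : Type} [Fintype E] [DecidableEq E]
    (M : SurfaceMap V E F) (T : E → ℤ) : Prop :=
  ∀ W, M.dual.IsClosedWalk W → beta T (charFlow W) ≡ 0 [ZMOD 3]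


/-!
A dual closed walk `W` pairs to zero with every facial flow, because `β(∂f, W)` telescopes
along `W`; so a partition `T = T₀ + T₁ + T₂` into homologous parts gives `β(T, W) = 3 β(T₁, W)`.
Conversely, if `β(T, ·)` vanishes mod 3 on dual closed walks then `T mod 3` is the coboundary of
a potential `r : F → ZMod 3` on the faces, obtained by summing `T` along dual walks from a base
face of each component. Putting every edge of `T` into the class given by the potential of the
face on its left, the difference of two consecutive classes is the boundary of a set of faces
`{f | r f = i}`, hence lies in the facial subgroup.
-/

variable {V E F : Type}

def reverseWalk (l : List (E × Bool)) : List (E × Bool) :=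
  (l.map fun d => (d.1, !d.2)).reverse

/-- The sum of `c` along a walk, with the sign of each traversal. -/
def dartSum {A : Type*} [AddCommGroup A] (c : E → A) (l : List (E × Bool)) : A :=
  (l.map fun d => if d.2 then c d.1 else -c d.1).sum

section DartSum

variable {A B : Type*} [AddCommGroup A] [AddCommGroup B]

@[simp] theorem dartSum_nil (c : E → A) : dartSum c [] = 0 := rfl

@[simp] theorem dartSum_cons (c : E → A) (d : E × Bool) (l : List (E × Bool)) :
    dartSum c (d :: l) = (if d.2 then c d.1 else -c d.1) + dartSum c l := by
  simp [dartSum]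

theorem dartSum_append (c : E → A) (l l' : List (E × Bool)) :
    dartSum c (l ++ l') = dartSum c l + dartSum c l' := by
  simp [dartSum]

theorem dartSum_reverseWalk (c : E → A) (l : List (E × Bool)) :
    dartSum c (reverseWalk l) = -dartSum c l := by
  induction l with
  | nil => simp [reverseWalk]
  | cons d l ih =>
    have : reverseWalk (d :: l) = reverseWalk l ++ [(d.1, !d.2)] := by simp [reverseWalk]
    rw [this, dartSum_append, ih]
    rcases d with ⟨e, _ | _⟩ <;> simp [add_comm]

theorem map_dartSum (φ : A →+ B) (c : E → A) (l : List (E × Bool)) :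
    φ (dartSum c l) = dartSum (fun e => φ (c e)) l := by
  induction l with
  | nil => simp
  | cons d l ih => rw [dartSum_cons, dartSum_cons, map_add, ih]; split_ifs <;> simp

theorem charFlow_append [DecidableEq E] (l l' : List (E × Bool)) :
    charFlow (l ++ l') = charFlow l + charFlow l' := by
  funext e; simp only [charFlow, List.count_append, Pi.add_apply]; push_cast; ring

theorem charFlow_singleton [DecidableEq E] (d : E × Bool) :
    charFlow [d] = Pi.single d.1 (if d.2 then 1 else -1) := by
  funext e
  rcases d with ⟨a, _ | _⟩ <;> rcases eq_or_ne a e with rfl | h <;> simp [charFlow, *]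

theorem beta_eq_dotProduct [Fintype E] (p q : E → ℤ) : beta p q = p ⬝ᵥ q := rfl

theorem beta_charFlow [Fintype E] [DecidableEq E] (p : E → ℤ) (l : List (E × Bool)) :
    beta p (charFlow l) = dartSum p l := by
  induction l with
  | nil => simp [beta, charFlow]
  | cons d l ih =>
    rw [← List.singleton_append, charFlow_append, dartSum_append, ← ih, beta_eq_dotProduct,
      beta_eq_dotProduct, dotProduct_add, charFlow_singleton, dotProduct_single]
    rcases d with ⟨a, _ | _⟩ <;> simp

end DartSum

namespace Multigraph

def IsWalk (M : Multigraph V E) : V → V → List (E × Bool) → Prop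
  | a, b, [] => a = b
  | a, b, d :: l => M.dtail d = a ∧ M.IsWalk (M.dhead d) b l

variable {M : Multigraph V E}

theorem IsWalk.append {a b c : V} {l l' : List (E × Bool)} (h : M.IsWalk a b l)
    (h' : M.IsWalk b c l') : M.IsWalk a c (l ++ l') := by
  induction l generalizing a with
  | nil => cases h; exact h'
  | cons d l ih => exact ⟨h.1, ih h.2⟩

theorem IsWalk.reverseWalk {a b : V} {l : List (E × Bool)} (h : M.IsWalk a b l) :
    M.IsWalk b a (reverseWalk l) := by
  induction l generalizing a with
  | nil => cases h; exact rfl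
  | cons d l ih =>
    have : _root_.reverseWalk (d :: l) = _root_.reverseWalk l ++ [(d.1, !d.2)] := by
      simp [_root_.reverseWalk]
    rw [this]
    rcases d with ⟨e, _ | _⟩ <;> exact (ih h.2).append ⟨rfl, h.1⟩

theorem isWalk_cons_iff {a b : V} {d : E × Bool} {l : List (E × Bool)} :
    M.IsWalk a b (d :: l) ↔
      M.dtail d = a ∧ (d :: l).IsChain (fun d d' => M.dhead d = M.dtail d') ∧
        M.dhead ((d :: l).getLast (List.cons_ne_nil d l)) = b := by
  induction l generalizing a d with
  | nil => simp [IsWalk]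
  | cons d' l ih =>
    show M.dtail d = a ∧ M.IsWalk (M.dhead d) b (d' :: l) ↔ _
    rw [ih, List.isChain_cons_cons, List.getLast_cons_cons, @eq_comm _ (M.dhead d)]
    tauto

theorem isClosedWalk_iff {l : List (E × Bool)} :
    M.IsClosedWalk l ↔ l ≠ [] ∧ ∃ a, M.IsWalk a a l := by
  cases l with
  | nil => simp [IsClosedWalk]
  | cons d l =>
    simp only [IsClosedWalk, isWalk_cons_iff,
      List.getLast?_eq_some_getLast (List.cons_ne_nil d l)]
    simp only [ne_eq, reduceCtorEq, not_false_eq_true, List.head?_cons, Option.mem_def,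
      Option.some.injEq, forall_eq', true_and, existsAndEq, and_congr_left_iff]
    exact fun _ => Iff.rfl

variable {A : Type*} [AddCommGroup A]

theorem IsWalk.dartSum_coboundary (g : V → A) {a b : V} {l : List (E × Bool)}
    (h : M.IsWalk a b l) : dartSum (fun e => g (M.tgt e) - g (M.src e)) l = g b - g a := by
  induction l generalizing a with
  | nil => cases h; simp
  | cons d l ih =>
    rw [dartSum_cons, ih h.2, ← h.1]
    rcases d with ⟨e, _ | _⟩ <;> simp [dtail, dhead]

theorem IsClosedWalk.dartSum_coboundary (g : V → A) {l : List (E × Bool)}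
    (h : M.IsClosedWalk l) : dartSum (fun e => g (M.tgt e) - g (M.src e)) l = 0 := by
  obtain ⟨-, a, ha⟩ := isClosedWalk_iff.1 h
  rw [ha.dartSum_coboundary, sub_self]

def reachableSetoid (M : Multigraph V E) : Setoid V where
  r a b := ∃ l, M.IsWalk a b l
  iseqv :=
    ⟨fun _ => ⟨[], rfl⟩, fun ⟨_, h⟩ => ⟨_, h.reverseWalk⟩, fun ⟨_, h⟩ ⟨_, h'⟩ => ⟨_, h.append h'⟩⟩

theorem exists_potential_of_dartSum_eq_zero (c : E → A)
    (hc : ∀ l, M.IsClosedWalk l → dartSum c l = 0) :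
    ∃ r : V → A, ∀ e, c e = r (M.tgt e) - r (M.src e) := by
  let s := M.reachableSetoid
  have hwalk (v : V) : ∃ l, M.IsWalk (Quotient.mk s v).out v l := Quotient.mk_out (s := s) v
  choose w hw using hwalk
  refine ⟨fun v => dartSum c (w v), fun e => ?_⟩
  have hbase : (Quotient.mk s (M.src e)).out = (Quotient.mk s (M.tgt e)).out :=
    congrArg _ (Quotient.sound ⟨[(e, true)], rfl, rfl⟩)
  have hloop : M.IsWalk (Quotient.mk s (M.src e)).out (Quotient.mk s (M.src e)).out
      (w (M.src e) ++ (e, true) :: reverseWalk (w (M.tgt e))) :=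
    (hw _).append ⟨rfl, by rw [hbase]; exact (hw _).reverseWalk⟩
  have hzero := hc _ (isClosedWalk_iff.2 ⟨by simp, _, hloop⟩)
  rw [dartSum_append, dartSum_cons, dartSum_reverseWalk] at hzero
  rw [eq_sub_iff_add_eq, ← sub_eq_zero, ← hzero]
  simp only [if_true]
  abel

end Multigraph

section TutteClass

variable {M : SurfaceMap V E F} {T : E → ℤ} {r : F → ZMod 3}

/-- An edge of `T` goes to the class given by the potential of the face on its left when it is
traversed in its `T`-direction. -/
def tutteClass (M : SurfaceMap V E F) (T : E → ℤ) (r : F → ZMod 3) (i : ZMod 3) : E → ℤ :=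
  fun e => if T e = 1 ∧ r (M.leftFace e) = i then 1
    else if T e = -1 ∧ r (M.rightFace e) = i then -1 else 0

theorem isSubgraphFlow_tutteClass (i : ZMod 3) : IsSubgraphFlow (tutteClass M T r i) := by
  intro e
  unfold tutteClass
  split_ifs <;> simp

theorem tutteClass_sum (hT : IsSubgraphFlow T) (e : E) :
    T e = tutteClass M T r 0 e + tutteClass M T r 1 e + tutteClass M T r 2 e := by
  unfold tutteClass
  generalize r (M.leftFace e) = a, r (M.rightFace e) = b
  rcases hT e with h | h | h <;> rw [h] <;> revert a b <;> decide

theorem tutteClass_disjoint (e : E) :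
    (tutteClass M T r 0 e = 0 ∧ tutteClass M T r 1 e = 0) ∨
      (tutteClass M T r 0 e = 0 ∧ tutteClass M T r 2 e = 0) ∨
      (tutteClass M T r 1 e = 0 ∧ tutteClass M T r 2 e = 0) := by
  unfold tutteClass
  have : (2 : ZMod 3) ≠ 0 ∧ (2 : ZMod 3) ≠ 1 := by decide
  split_ifs <;> simp_all

theorem tutteClass_sub_succ (hT : IsSubgraphFlow T)
    (hr : ∀ e, (T e : ZMod 3) = r (M.leftFace e) - r (M.rightFace e)) (i : ZMod 3) :
    tutteClass M T r i - tutteClass M T r (i + 1) =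
      fun e =>
        (if r (M.leftFace e) = i then 1 else 0) - (if r (M.rightFace e) = i then 1 else 0) := by
  funext e
  have hre := hr e
  simp only [Pi.sub_apply, tutteClass]
  generalize r (M.leftFace e) = a, r (M.rightFace e) = b at hre ⊢
  rcases hT e with h | h | h <;> rw [h] at hre ⊢ <;> revert a b i <;> decide

end TutteClass

section Surface

variable [Fintype E] [DecidableEq E] {M : SurfaceMap V E F} {T : E → ℤ}

theorem SurfaceMap.GoodFacialWalks.beta_eq_zero_of_mem_facialSubgroup [DecidableEq F]
    (hM : M.GoodFacialWalks) {g : E → ℤ} (hg : g ∈ M.FacialSubgroup) {W : List (E × Bool)}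
    (hW : M.dual.IsClosedWalk W) : beta g (charFlow W) = 0 := by
  induction hg using AddSubgroup.closure_induction with
  | mem _ hx =>
    obtain ⟨f, rfl⟩ := hx
    dsimp only
    rw [beta_charFlow, show charFlow (M.facialWalk f) = fun e =>
      (if M.leftFace e = f then 1 else 0) - (if M.rightFace e = f then 1 else 0) from
      funext (hM.2 f)]
    exact hW.dartSum_coboundary fun f' => if f' = f then (1 : ℤ) else 0
  | zero => exact zero_dotProduct _
  | add _ _ _ _ hx hy => rw [beta_eq_dotProduct, add_dotProduct, ← beta_eq_dotProduct,
      ← beta_eq_dotProduct, hx, hy, add_zero]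
  | neg _ _ hx => rw [beta_eq_dotProduct, neg_dotProduct, ← beta_eq_dotProduct, hx, neg_zero]

/-- The boundary of the set of faces satisfying `P` is the sum of their facial flows. -/
theorem SurfaceMap.GoodFacialWalks.boundary_mem_facialSubgroup [DecidableEq F]
    (hM : M.GoodFacialWalks) (P : F → Prop) [DecidablePred P] :
    (fun e => (if P (M.leftFace e) then 1 else 0) - (if P (M.rightFace e) then 1 else 0) :
      E → ℤ) ∈ M.FacialSubgroup := by
  let S := Finset.univ.image M.leftFace ∪ Finset.univ.image M.rightFace
  convert (AddSubgroup.sum_mem _ fun f _ => AddSubgroup.subset_closure ⟨f, rfl⟩ :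
    ∑ f ∈ S.filter P, charFlow (M.facialWalk f) ∈ M.FacialSubgroup) using 1
  funext e
  rw [Finset.sum_apply]
  simp only [hM.2, Finset.sum_sub_distrib, Finset.sum_ite_eq]
  simp [S]

theorem Partitionable.isTopologicalTutte [DecidableEq F] (hM : M.GoodFacialWalks)
    (hT : Partitionable M T) : IsTopologicalTutte M T := by
  obtain ⟨T0, T1, T2, -, -, -, hsum, -, h01, h12⟩ := hT
  intro W hW
  have h01' := hM.beta_eq_zero_of_mem_facialSubgroup h01 hW
  have h12' := hM.beta_eq_zero_of_mem_facialSubgroup h12 hW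
  obtain rfl : T = T0 + T1 + T2 := funext hsum
  simp only [beta_eq_dotProduct, sub_dotProduct, add_dotProduct] at *
  rw [Int.modEq_zero_iff_dvd]
  exact ⟨T1 ⬝ᵥ charFlow W, by linarith⟩

theorem IsTopologicalTutte.exists_potential (hT : IsTopologicalTutte M T) :
    ∃ r : F → ZMod 3, ∀ e, (T e : ZMod 3) = r (M.leftFace e) - r (M.rightFace e) := by
  refine M.dual.exists_potential_of_dartSum_eq_zero _ fun W hW => ?_
  have h3 := (ZMod.intCast_eq_intCast_iff _ _ 3).2 (hT W hW)
  rw [beta_charFlow] at h3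
  simpa using (map_dartSum (Int.castAddHom (ZMod 3)) T W).symm.trans h3

theorem homologous_tutteClass [DecidableEq F] (hM : M.GoodFacialWalks) (hT : IsSubgraphFlow T)
    {r : F → ZMod 3} (hr : ∀ e, (T e : ZMod 3) = r (M.leftFace e) - r (M.rightFace e))
    (i : ZMod 3) : M.Homologous (tutteClass M T r i) (tutteClass M T r (i + 1)) := by
  rw [SurfaceMap.Homologous, tutteClass_sub_succ hT hr]
  exact hM.boundary_mem_facialSubgroup fun f => r f = i

theorem partitionable_of_potential [DecidableEq F] (hM : M.GoodFacialWalks)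
    (hT : IsSubgraphFlow T) {r : F → ZMod 3}
    (hr : ∀ e, (T e : ZMod 3) = r (M.leftFace e) - r (M.rightFace e)) : Partitionable M T :=
  ⟨_, _, _, isSubgraphFlow_tutteClass 0, isSubgraphFlow_tutteClass 1,
    isSubgraphFlow_tutteClass 2, tutteClass_sum hT, tutteClass_disjoint,
    homologous_tutteClass hM hT hr 0, homologous_tutteClass hM hT hr 1⟩

end Surface

theorem partitionable_iff_topologicalTutte {V E F : Type} [Fintype E] [DecidableEq E]
    [DecidableEq F]
    (M : SurfaceMap V E F) (hM : M.GoodFacialWalks)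
    (T : E → ℤ) (hT : IsSubgraphFlow T) :
    Partitionable M T ↔ IsTopologicalTutte M T := by
  refine ⟨Partitionable.isTopologicalTutte hM, fun hTutte => ?_⟩
  obtain ⟨r, hr⟩ := hTutte.exists_potential
  exact partitionable_of_potential hM hT hr
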